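/- arXiv:1901.08800 — 2 statements merged into one kernel-verified Lean document; each statement's English description precedes it below -/
import Mathlib

section
/- Let u: [0,a] → [0,∞) be continuous and increasing with u(v) = 0 for some v ∈ [0,a), u(a) > 0, and suppose u is absolutely continuous with du(s) ≤ r(e^{Ks} u(s)) ds for a constant K ≥ 0 and an increasing function r: [0,∞) → (0,∞) on (0,∞). Then for every t ∈ (v, a], a - t ≥ e^{-Ka} ∫_{e^{Ka}u(t)}^{e^{Ka}u(a)} du/r(u). Consequently, if ∫_{0+} du/r(u) = ∞, then a - v = ∞, a contradiction; hence no such u with u(a) > 0 exists. -/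
/-!
Fix `s` with `u s > 0`, put `m = e^{Ka} u` and `G(y) = ∫_{m s}^{y} dx / r(x)`. Since
`e^{Kx} u x ≤ m q` on `[p, q]`, the hypothesis gives `m q - m p ≤ e^{Ka} (q - p) r(m q)`, hence
`G(m q) - G(m p) ≤ e^{Ka} (q - p) r(m q) / r(m p)`. The ratio `r(m q) / r(m p)` need not tend
to `1` as `q → p` since `r` may jump, but its excess over `1` telescopes: on steps shorter
than `η r(m s) e^{-Ka}` the function `G ∘ m - e^{Ka} t - η r ∘ m` decreases, so
`G(m a) ≤ e^{Ka} (a - s) + η (r(m a) - r(m s))` for every `η > 0`. Near a zero of `u` the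
intermediate value theorem realises every small lower limit of integration, which bounds the
improper integral `∫_{0}^{e^{Ka} u(a)} dx / r(x)` and in particular makes it finite.
-/

open MeasureTheory Real Set Filter Topology intervalIntegral

theorem antitoneOn_Icc_of_forall_le_add {f : ℝ → ℝ} {s b δ : ℝ} (hδ : 0 < δ)
    (h : ∀ p ∈ Icc s b, ∀ q ∈ Icc s b, p ≤ q → q ≤ p + δ → f q ≤ f p) :
    AntitoneOn f (Icc s b) := by
  have hchain : ∀ n : ℕ, ∀ p ∈ Icc s b, ∀ q ∈ Icc s b, p ≤ q → q ≤ p + n * δ → f q ≤ f p := by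
    intro n
    induction n with
    | zero =>
      intro p _ q _ hpq hqp
      rw [le_antisymm (by simpa using hqp) hpq]
    | succ n ih =>
      intro p hp q hq hpq hqp
      have hz : max p (q - δ) ∈ Icc s b :=
        ⟨hp.1.trans (le_max_left _ _), max_le (hpq.trans hq.2) (by linarith [hq.2])⟩
      refine (h _ hz q hq (max_le hpq (by linarith)) (by linarith [le_max_right p (q - δ)])).trans
        (ih p hp _ hz (le_max_left _ _) (max_le ?_ ?_))
      · nlinarith [n.cast_nonneg (α := ℝ)]
      · push_cast at hqp
        linarith
  intro p hp q hq hpq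
  obtain ⟨n, hn⟩ := exists_nat_ge ((q - p) / δ)
  exact hchain n p hp q hq hpq (by rw [div_le_iff₀ hδ] at hn; linarith)

theorem intervalIntegral_le_sub_mul_of_le {f : ℝ → ℝ} {a b M : ℝ} (hab : a ≤ b)
    (hf : IntervalIntegrable f volume a b) (h : ∀ x ∈ Icc a b, f x ≤ M) :
    ∫ x in a..b, f x ≤ (b - a) * M := by
  simpa using integral_mono_on hab hf intervalIntegrable_const h

theorem integrableOn_Ioc_and_integral_le_of_forall_integral_le {f : ℝ → ℝ} {z Y C : ℝ}
    (hzY : z < Y) (hf_nonneg : ∀ x ∈ Ioc z Y, 0 ≤ f x)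
    (hf_int : ∀ y ∈ Ioc z Y, IntervalIntegrable f volume y Y)
    (hbound : ∀ y ∈ Ioc z Y, ∫ x in y..Y, f x ≤ C) :
    IntegrableOn f (Ioc z Y) ∧ ∫ x in z..Y, f x ≤ C := by
  set y : ℕ → ℝ := fun n => z + (Y - z) / (n + 1)
  have hy_mem : ∀ n, y n ∈ Ioc z Y := fun n => by
    have hlen : 0 < Y - z := sub_pos.2 hzY
    have hshrink : (Y - z) / (n + 1) ≤ Y - z := div_le_self hlen.le (by simp)
    exact ⟨lt_add_of_pos_right z (by positivity), by simp only [y]; linarith⟩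
  have hy_lim : Tendsto y atTop (𝓝 z) := by
    simpa [y] using tendsto_const_nhds.add
      ((tendsto_const_div_atTop_nhds_zero_nat (Y - z)).comp (tendsto_add_atTop_nat 1))
  have hint : IntegrableOn f (Ioc z Y) := by
    refine integrableOn_Ioc_of_intervalIntegral_norm_bounded_left (I := C)
      (fun n => (hf_int _ (hy_mem n)).1) hy_lim (Eventually.of_forall fun n => ?_)
    have hsub : Ioc (y n) Y ⊆ Ioc z Y := Ioc_subset_Ioc_left (hy_mem n).1.le
    rw [setIntegral_congr_fun measurableSet_Ioc fun x hx => norm_of_nonneg (hf_nonneg x (hsub hx)),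
      ← integral_of_le (hy_mem n).2]
    exact hbound _ (hy_mem n)
  refine ⟨hint, ?_⟩
  have hcont : ContinuousOn (fun y => ∫ x in y..Y, f x) (Icc z Y) := by
    simpa [uIcc_of_le hzY.le] using
      continuousOn_primitive_interval_left (μ := volume) (a := z) (b := Y)
        (by rw [uIcc_of_le hzY.le]
            exact (integrableOn_Icc_iff_integrableOn_Ioc enorm_ne_top).2 hint)
  exact ContinuousWithinAt.closure_le (by rw [closure_Ioc hzY.ne]; exact left_mem_Icc.2 hzY.le)
    ((hcont z (left_mem_Icc.2 hzY.le)).mono Ioc_subset_Icc_self) continuousWithinAt_const hbound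

theorem intervalIntegrable_inv_of_monotoneOn {r : ℝ → ℝ} (hr_mono : MonotoneOn r (Ici 0))
    (hr_pos : ∀ x : ℝ, 0 < x → 0 < r x) {y z : ℝ} (hy : 0 < y) (hz : 0 < z) :
    IntervalIntegrable (fun x => (r x)⁻¹) volume y z := by
  refine AntitoneOn.intervalIntegrable fun x hx x' hx' hxx' => ?_
  have hx0 : 0 < x := lt_of_lt_of_le (lt_min hy hz) hx.1
  exact inv_anti₀ (hr_pos x hx0) (hr_mono hx0.le (hx0.le.trans hxx') hxx')

theorem integral_inv_le_of_monotoneOn {r : ℝ → ℝ} (hr_mono : MonotoneOn r (Ici 0))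
    (hr_pos : ∀ x : ℝ, 0 < x → 0 < r x) {y z : ℝ} (hy : 0 < y) (hyz : y ≤ z) :
    ∫ x in y..z, (r x)⁻¹ ≤ (z - y) * (r y)⁻¹ :=
  intervalIntegral_le_sub_mul_of_le hyz
    (intervalIntegrable_inv_of_monotoneOn hr_mono hr_pos hy (hy.trans_le hyz)) fun _ hx =>
      inv_anti₀ (hr_pos y hy) (hr_mono hy.le (hy.le.trans hx.1) hx.1)

theorem integral_inv_le_add_of_sub_le_mul {r : ℝ → ℝ} (hr_mono : MonotoneOn r (Ici 0))
    (hr_pos : ∀ x : ℝ, 0 < x → 0 < r x) {y z h η : ℝ} (hy : 0 < y) (hyz : y ≤ z)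
    (hstep : z - y ≤ h * r z) (hshort : h ≤ η * r y) :
    ∫ x in y..z, (r x)⁻¹ ≤ h + η * (r z - r y) := by
  have hry := hr_pos y hy
  have hryz : r y ≤ r z := hr_mono hy.le (hy.le.trans hyz) hyz
  have hnaive := integral_inv_le_of_monotoneOn hr_mono hr_pos hy hyz
  rw [← div_eq_mul_inv, le_div_iff₀ hry] at hnaive
  have hcharge : h * r z ≤ (h + η * (r z - r y)) * r y := by nlinarith
  exact le_of_mul_le_mul_right (hnaive.trans (hstep.trans hcharge)) hry

theorem integral_inv_le_of_sub_le_mul {r : ℝ → ℝ} (hr_mono : MonotoneOn r (Ici 0))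
    (hr_pos : ∀ x : ℝ, 0 < x → 0 < r x) {m : ℝ → ℝ} {s b c : ℝ}
    (hm_mono : MonotoneOn m (Icc s b)) (hms : 0 < m s) (hc : 0 < c) (hsb : s ≤ b)
    (hstep : ∀ p ∈ Icc s b, ∀ q ∈ Icc s b, p ≤ q → m q - m p ≤ c * (q - p) * r (m q)) :
    ∫ x in m s..m b, (r x)⁻¹ ≤ c * (b - s) := by
  have hm_pos : ∀ p ∈ Icc s b, 0 < m p := fun p hp =>
    hms.trans_le (hm_mono (left_mem_Icc.2 hsb) hp hp.1)
  have hint : ∀ p ∈ Icc s b, IntervalIntegrable (fun x => (r x)⁻¹) volume (m s) (m p) :=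
    fun p hp => intervalIntegrable_inv_of_monotoneOn hr_mono hr_pos hms (hm_pos p hp)
  set D := r (m b) - r (m s)
  have hη : ∀ η : ℝ, 0 < η → ∫ x in m s..m b, (r x)⁻¹ ≤ c * (b - s) + η * D := by
    intro η hη
    have hψ : AntitoneOn (fun t => (∫ x in m s..m t, (r x)⁻¹) - c * t - η * r (m t))
        (Icc s b) := by
      refine antitoneOn_Icc_of_forall_le_add (δ := η * r (m s) / c)
        (div_pos (mul_pos hη (hr_pos _ hms)) hc) fun p hp q hq hpq hqp => ?_
      have hshort : c * (q - p) ≤ η * r (m p) := calc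
        c * (q - p) ≤ c * (η * r (m s) / c) := by gcongr; linarith
        _ = η * r (m s) := mul_div_cancel₀ _ hc.ne'
        _ ≤ η * r (m p) := by
          gcongr
          exact hr_mono hms.le (hm_pos p hp).le (hm_mono (left_mem_Icc.2 hsb) hp hp.1)
      have hpiece := integral_inv_le_add_of_sub_le_mul hr_mono hr_pos (hm_pos p hp)
        (hm_mono hp hq hpq) (hstep p hp q hq hpq) hshort
      have hsplit := integral_interval_sub_left (hint q hq) (hint p hp)
      linarith
    have := hψ (left_mem_Icc.2 hsb) (right_mem_Icc.2 hsb) hsb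
    simp only [integral_same] at this
    linarith
  have hlim : Tendsto (fun η => c * (b - s) + η * D) (𝓝[>] 0) (𝓝 (c * (b - s))) :=
    tendsto_nhdsWithin_of_tendsto_nhds <| by
      simpa using (continuous_const.add (continuous_id.mul continuous_const)).tendsto
        (f := fun η : ℝ => c * (b - s) + η * D) 0
  exact ge_of_tendsto hlim (eventually_nhdsWithin_of_forall hη)

theorem integral_inv_le_of_sub_le_integral {r : ℝ → ℝ} (hr_mono : MonotoneOn r (Ici 0))
    (hr_pos : ∀ x : ℝ, 0 < x → 0 < r x) {u : ℝ → ℝ} {K s a : ℝ} (hK : 0 ≤ K)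
    (hu_mono : MonotoneOn u (Icc s a)) (hus : 0 < u s) (hsa : s ≤ a)
    (hu_ode : ∀ p ∈ Icc s a, ∀ q ∈ Icc s a, p ≤ q →
      u q - u p ≤ ∫ x in p..q, r (exp (K * x) * u x)) :
    ∫ x in exp (K * a) * u s..exp (K * a) * u a, (r x)⁻¹ ≤ exp (K * a) * (a - s) := by
  have hu_pos : ∀ x ∈ Icc s a, 0 < u x := fun x hx =>
    hus.trans_le (hu_mono (left_mem_Icc.2 hsa) hx hx.1)
  have hw_mono : MonotoneOn (fun x => exp (K * x) * u x) (Icc s a) := fun x hx y hy hxy =>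
    mul_le_mul (exp_le_exp.2 (by nlinarith)) (hu_mono hx hy hxy) (hu_pos x hx).le (exp_pos _).le
  have hw_le : ∀ x ∈ Icc s a, ∀ q ∈ Icc s a, x ≤ q → exp (K * x) * u x ≤ exp (K * a) * u q :=
    fun x hx q hq hxq => mul_le_mul (exp_le_exp.2 (by nlinarith [hq.2]))
      (hu_mono hx hq hxq) (hu_pos x hx).le (exp_pos _).le
  have hrw_mono : MonotoneOn (fun x => r (exp (K * x) * u x)) (Icc s a) := fun x hx y hy hxy =>
    hr_mono (mul_pos (exp_pos _) (hu_pos x hx)).le (mul_pos (exp_pos _) (hu_pos y hy)).le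
      (hw_mono hx hy hxy)
  refine integral_inv_le_of_sub_le_mul hr_mono hr_pos
    (fun x hx y hy hxy => mul_le_mul_of_nonneg_left (hu_mono hx hy hxy) (exp_pos _).le)
    (mul_pos (exp_pos _) hus) (exp_pos _) hsa fun p hp q hq hpq => ?_
  have hpq_sub : Icc p q ⊆ Icc s a := Icc_subset_Icc hp.1 hq.2
  have hode : u q - u p ≤ (q - p) * r (exp (K * a) * u q) :=
    (hu_ode p hp q hq hpq).trans <| intervalIntegral_le_sub_mul_of_le hpq
      ((hrw_mono.mono (by rwa [uIcc_of_le hpq])).intervalIntegrable) fun x hx =>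
        hr_mono (mul_pos (exp_pos _) (hu_pos x (hpq_sub hx))).le
          (mul_pos (exp_pos _) (hu_pos q hq)).le (hw_le x (hpq_sub hx) q hq hx.2)
  calc exp (K * a) * u q - exp (K * a) * u p = exp (K * a) * (u q - u p) := by ring
    _ ≤ exp (K * a) * ((q - p) * r (exp (K * a) * u q)) := by gcongr
    _ = _ := by ring

/-- Change-of-variables estimate in the uniqueness proof: if `u` is continuous
increasing on `[0,a]` with `u v = 0`, `u a > 0`, and
`u t - u s ≤ ∫_s^t r(e^{Kx} u x) dx`, then for every `t ∈ (v, a]`,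
`a - t ≥ e^{-Ka} ∫_{e^{Ka}u(t)}^{e^{Ka}u(a)} du / r(u)`; consequently, if
`∫_{0+} du / r(u) = ∞`, we reach a contradiction: no such `u` with `u a > 0`
exists. -/
theorem osgood_change_of_variables
    (K : ℝ) (hK : 0 ≤ K) (a v : ℝ) (hv : 0 ≤ v) (hva : v < a)
    (r : ℝ → ℝ) (hr_mono : MonotoneOn r (Ici 0))
    (hr_pos : ∀ x : ℝ, 0 < x → 0 < r x)
    (u : ℝ → ℝ) (hu_cont : ContinuousOn u (Icc 0 a))
    (hu_mono : MonotoneOn u (Icc 0 a))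
    (hu_nonneg : ∀ t ∈ Icc 0 a, 0 ≤ u t)
    (huv : u v = 0) (hua : 0 < u a)
    (hu_ode : ∀ s t : ℝ, v ≤ s → s ≤ t → t ≤ a →
      u t - u s ≤ ∫ x in s..t, r (Real.exp (K * x) * u x)) :
    (∀ t ∈ Ioc v a,
        Real.exp (-(K * a)) *
            ∫ x in (Real.exp (K * a) * u t)..(Real.exp (K * a) * u a), (r x)⁻¹
          ≤ a - t) ∧
      ((∀ ε : ℝ, 0 < ε →
          ¬ IntegrableOn (fun x => (r x)⁻¹) (Ioo 0 ε) volume) → False) := by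
  set c := exp (K * a)
  have hc : 0 < c := exp_pos _
  have hY : 0 < c * u a := mul_pos hc hua
  have hkey : ∀ s ∈ Icc v a, 0 < u s → ∫ x in c * u s..c * u a, (r x)⁻¹ ≤ c * (a - s) :=
    fun s hs hus => integral_inv_le_of_sub_le_integral hr_mono hr_pos hK
      (hu_mono.mono (Icc_subset_Icc (hv.trans hs.1) le_rfl)) hus hs.2
      fun p hp q hq hpq => hu_ode p q (hs.1.trans hp.1) hpq hq.2
  have htail : ∀ t ∈ Icc v a, u t = 0 → ∀ y ∈ Ioc 0 (c * u a),
      ∫ x in y..c * u a, (r x)⁻¹ ≤ c * (a - t) := by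
    intro t ht hut y hy
    obtain ⟨t', ht', rfl⟩ := intermediate_value_Icc ht.2
      ((hu_cont.mono (Icc_subset_Icc (hv.trans ht.1) le_rfl)).const_smul c)
      ⟨by simpa [hut] using hy.1.le, hy.2⟩
    have hut' : 0 < u t' := pos_of_mul_pos_right hy.1 hc.le
    exact (hkey t' ⟨ht.1.trans ht'.1, ht'.2⟩ hut').trans (by gcongr; exact ht'.1)
  have himproper : ∀ t ∈ Icc v a, u t = 0 → IntegrableOn (fun x => (r x)⁻¹) (Ioc 0 (c * u a)) ∧
      ∫ x in 0..c * u a, (r x)⁻¹ ≤ c * (a - t) := fun t ht hut =>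
    integrableOn_Ioc_and_integral_le_of_forall_integral_le hY
      (fun x hx => (inv_pos.2 (hr_pos x hx.1)).le)
      (fun y hy => intervalIntegrable_inv_of_monotoneOn hr_mono hr_pos hy.1 hY) (htail t ht hut)
  refine ⟨fun t ht => ?_, fun hdiv => hdiv _ hY
    ((himproper v ⟨le_rfl, hva.le⟩ huv).1.mono_set Ioo_subset_Ioc_self)⟩
  rw [exp_neg, inv_mul_le_iff₀ hc]
  have ht' : t ∈ Icc v a := Ioc_subset_Icc_self ht
  rcases (hu_nonneg t ⟨hv.trans ht'.1, ht.2⟩).eq_or_lt with hut | hut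
  · rw [← hut, mul_zero]
    exact (himproper t ht' hut.symm).2
  · exact hkey t ht' hut
end

section
/- Let (β, q) and (β′, q′) be pairs of nonnegative rate functions with β(x) ≤ β′(x) and q(x,z) ≤ q′(x,z) for all x ≥ 0, z > 0, and assume additionally that x ↦ β(x) is increasing and for each z, either x ↦ q(x,z) or x ↦ q′(x,z) is increasing. If Y_{k-1}(s) ≤ Y′_{k-1}(s) pathwise for all s, then the Picard iterates satisfy Y_k(t) ≤ Y′_k(t) pathwise for all t, where Y_k(t) = X_t + ∫_0^t h_{t-s} β(Y_{k-1}(s-)) ds + ∫_0^t ∫_0^{β(Y_{k-1}(s-))} ∫_W w(t-s) N_0(ds,du,dw) + ∫_0^t ∫_0^∞ ∫_0^{q(Y_{k-1}(s-),z)} ∫_W w(t-s) N_1(ds,dz,du,dw), and similarly for Y′_k with (β′,q′). -/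
/-! Raising the upper limit of the `u`-integral of a Poisson integral only enlarges the domain of
a nonnegative integrand, so `picardStep` is monotone in the rates evaluated along the previous
iterate. Monotonicity of `β`, and of `q(·, z)` or `q'(·, z)`, turns `Y_{k-1} ≤ Y'_{k-1}` into
such a comparison of rates. -/

open MeasureTheory Real Set

/-- One Picard iterate of the immigration equation (1.13):
`Y_k(t) = X_t + ∫_0^t h_{t-s} β(Y_{k-1}(s)) ds
 + ∫_0^t ∫_0^{β(Y_{k-1}(s))} ∫_W w(t-s) N₀(ds,du,dw)
 + ∫_0^t ∫_0^∞ ∫_0^{q(Y_{k-1}(s),z)} ∫_W w(t-s) N₁(ds,dz,du,dw)`,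
with paths valued in `[0,∞]`. -/
noncomputable def picardStep (X : ℝ → ENNReal) (h : ℝ → ENNReal)
    (N₀ : Measure (ℝ × ℝ × (ℝ → ENNReal)))
    (N₁ : Measure (ℝ × ℝ × ℝ × (ℝ → ENNReal)))
    (β : ENNReal → ENNReal) (q : ENNReal → ℝ → ENNReal)
    (Y : ℝ → ENNReal) (t : ℝ) : ENNReal :=
  X t + (∫⁻ s in Ioc (0:ℝ) t, h (t - s) * β (Y s)) +
    (∫⁻ p in {p : ℝ × ℝ × (ℝ → ENNReal) |
        p.1 ∈ Ioc (0:ℝ) t ∧ 0 < p.2.1 ∧ ENNReal.ofReal p.2.1 ≤ β (Y p.1)},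
      p.2.2 (t - p.1) ∂N₀) +
    ∫⁻ p in {p : ℝ × ℝ × ℝ × (ℝ → ENNReal) |
        p.1 ∈ Ioc (0:ℝ) t ∧ 0 < p.2.1 ∧ 0 < p.2.2.1 ∧
          ENNReal.ofReal p.2.2.1 ≤ q (Y p.1) p.2.1},
      p.2.2.2 (t - p.1) ∂N₁

theorem apply_le_apply_of_monotone_or {α γ : Type*} [Preorder α] [Preorder γ] {f g : α → γ}
    (hfg : ∀ x, f x ≤ g x) (hmono : Monotone f ∨ Monotone g) {x y : α} (hxy : x ≤ y) :
    f x ≤ g y := by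
  rcases hmono with hf | hg
  · exact (hf hxy).trans (hfg y)
  · exact (hfg x).trans (hg hxy)

theorem picardStep_le_picardStep {X h : ℝ → ENNReal} {N₀ : Measure (ℝ × ℝ × (ℝ → ENNReal))}
    {N₁ : Measure (ℝ × ℝ × ℝ × (ℝ → ENNReal))} {β β' : ENNReal → ENNReal}
    {q q' : ENNReal → ℝ → ENNReal} {Y Y' : ℝ → ENNReal}
    (hβ : ∀ s, β (Y s) ≤ β' (Y' s)) (hq : ∀ s z, q (Y s) z ≤ q' (Y' s) z) (t : ℝ) :
    picardStep X h N₀ N₁ β q Y t ≤ picardStep X h N₀ N₁ β' q' Y' t := by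
  unfold picardStep
  gcongr
  · exact hβ _
  · exact hβ _
  · exact hq _ _

/-- Induction step of the comparison theorem (Theorem 5.5): if `β ≤ β'`,
`q ≤ q'`, `β` is increasing, for each `z` either `q(·,z)` or `q'(·,z)` is
increasing, and the previous iterates satisfy `Y_{k-1} ≤ Y'_{k-1}` pathwise,
then the next iterates satisfy `Y_k ≤ Y'_k` pathwise. -/
theorem picard_comparison_step
    (X : ℝ → ENNReal) (h : ℝ → ENNReal)
    (N₀ : Measure (ℝ × ℝ × (ℝ → ENNReal)))
    (N₁ : Measure (ℝ × ℝ × ℝ × (ℝ → ENNReal)))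
    (β β' : ENNReal → ENNReal) (q q' : ENNReal → ℝ → ENNReal)
    (hβ_mono : Monotone β)
    (hq_mono : ∀ z : ℝ, Monotone (fun x => q x z) ∨ Monotone (fun x => q' x z))
    (hββ' : ∀ x, β x ≤ β' x) (hqq' : ∀ x z, q x z ≤ q' x z)
    (Yprev Yprev' : ℝ → ENNReal) (hprev : ∀ s : ℝ, Yprev s ≤ Yprev' s) :
    ∀ t : ℝ, picardStep X h N₀ N₁ β q Yprev t ≤
      picardStep X h N₀ N₁ β' q' Yprev' t :=
  picardStep_le_picardStep
    (fun s => apply_le_apply_of_monotone_or hββ' (Or.inl hβ_mono) (hprev s))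
    (fun s z => apply_le_apply_of_monotone_or (fun x => hqq' x z) (hq_mono z) (hprev s))
end
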